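/- Let A be a structurable algebra over a field of characteristic not 2, 3, and let L = K(A) be its TKK Lie algebra with 5-grading L_{-2} = S_-, L_{-1} = A_-, L_0 = Inst(A), L_1 = A_+, L_2 = S_+. For a ∈ A and s, t ∈ S, the fourth power of ad(a_+ + s_+) applied to t_- equals ψ(a, U_a(t a))_+, and ad(a_+ + s_+)^5 (t_-) = 0. In particular exp(ad(a_+ + s_+))(t_-) = t_- + (−ta)_- + (L_s L_t − ½V_{a,ta}) + (−s(ta) + (1/6)U_a(ta))_+ + (−s(ts) − ½ψ(a, s(ta)) + (1/24)ψ(a, U_a(ta)))_+. -/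
import Mathlib


variable (k : Type*) [Field k] (A : Type*) [NonAssocRing A] [Module k A]
  [SMulCommClass k A A] [IsScalarTower k A A]

/-- The linear operator `V_{x,y} : z ↦ (x ȳ)z + (z ȳ)x − (z x̄)y`. -/
noncomputable def Vlin (bar : A → A) (x y : A) : Module.End k A :=
  LinearMap.mulLeft k (x * bar y)
    + (LinearMap.mulRight k x).comp (LinearMap.mulRight k (bar y))
    - (LinearMap.mulRight k y).comp (LinearMap.mulRight k (bar x))

/-- The span `Inst(A)` of all operators `V_{x,y}`. -/
noncomputable def InstSpan (bar : A → A) : Submodule k (Module.End k A) :=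
  Submodule.span k {W : Module.End k A | ∃ x y : A, W = Vlin k A bar x y}

/-- `V^ε = V − L_{V(1) + bar (V 1)}`. -/
noncomputable def Veps (bar : A → A) (V : Module.End k A) : Module.End k A :=
  V - LinearMap.mulLeft k (V 1 + bar (V 1))

/-- `V^δ = V + R_{bar (V 1)}`. -/
noncomputable def Vdelta (bar : A → A) (V : Module.End k A) : Module.End k A :=
  V + LinearMap.mulRight k (bar (V 1))

/-- The skewer map `ψ(x,y) = x ȳ − y x̄`. -/
def psiA (bar : A → A) (x y : A) : A := x * bar y - y * bar x

/-- The operator `U_x(y) = V_{x,y}(x)`. -/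
noncomputable def Uop (bar : A → A) (x y : A) : A := Vlin k A bar x y x

/-- Let `A` be a structurable algebra (char ≠ 2,3) and `L = K(A)` its TKK Lie algebra
with 5-grading `L₋₂ = S₋, L₋₁ = A₋, L₀ = Inst(A), L₁ = A₊, L₂ = S₊`, the graded
pieces being realized by linear maps `sm, am, ι0, ap, sp` into `L` subject to the
TKK bracket relations.  For `a ∈ A` and skew `s, t ∈ S`, the fourth power of
`ad(a₊ + s₊)` applied to `t₋` equals `ψ(a, U_a(ta))₊ ∈ S₊`, the fifth power kills
`t₋`, and `exp(ad(a₊ + s₊))(t₋)` is given by the explicit formula of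
Lemma `Image e₊`. -/
theorem statement17 (L : Type*) [LieRing L] [LieAlgebra k L]
    (h2 : (2 : k) ≠ 0) (h3 : (3 : k) ≠ 0)
    (bar : A →ₗ[k] A)
    (hbar_inv : ∀ x : A, bar (bar x) = x)
    (hbar_mul : ∀ x y : A, bar (x * y) = bar y * bar x)
    (hstruct : ∀ x y z w : A,
      (Vlin k A bar x y) ∘ₗ (Vlin k A bar z w) - (Vlin k A bar z w) ∘ₗ (Vlin k A bar x y)
        = Vlin k A bar (Vlin k A bar x y z) w - Vlin k A bar z (Vlin k A bar y x w))
    (ap am sp sm : A →ₗ[k] L) (ι0 : Module.End k A →ₗ[k] L)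
    -- the TKK bracket relations:
    (hLL : ∀ u v : A, bar u = -u → bar v = -v →
      (LinearMap.mulLeft k u) ∘ₗ (LinearMap.mulLeft k v) ∈ InstSpan k A bar)
    (h_ap_am : ∀ x y : A, ⁅ap x, am y⁆ = ι0 (Vlin k A bar x y))
    (h_sp_am : ∀ u y : A, bar u = -u → ⁅sp u, am y⁆ = ap (u * y))
    (h_ap_sm : ∀ x u : A, bar u = -u → ⁅ap x, sm u⁆ = - am (u * x))
    (h_sp_sm : ∀ u v : A, bar u = -u → bar v = -v →
      ⁅sp u, sm v⁆ = ι0 ((LinearMap.mulLeft k u) ∘ₗ (LinearMap.mulLeft k v)))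
    (h_i0_ap : ∀ V ∈ InstSpan k A bar, ∀ x : A, ⁅ι0 V, ap x⁆ = ap (V x))
    (h_i0_sp : ∀ V ∈ InstSpan k A bar, ∀ u : A, bar u = -u →
      ⁅ι0 V, sp u⁆ = sp (Vdelta k A bar V u))
    (h_ap_ap : ∀ x y : A, ⁅ap x, ap y⁆ = sp (psiA A (fun w => bar w) x y))
    (h_sp_ap : ∀ u x : A, bar u = -u → ⁅sp u, ap x⁆ = 0)
    (h_sp_sp : ∀ u v : A, bar u = -u → bar v = -v → ⁅sp u, sp v⁆ = 0)
    (a s t : A) (hs : bar s = -s) (ht : bar t = -t) :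
    ((LieAlgebra.ad k L (ap a + sp s)) ^ 4) (sm t)
        = sp (psiA A (fun x => bar x) a (Uop k A (fun x => bar x) a (t * a)))
    ∧ ((LieAlgebra.ad k L (ap a + sp s)) ^ 5) (sm t) = 0
    ∧ (∑ n ∈ Finset.range 5,
          (n.factorial : k)⁻¹ • (LieAlgebra.ad k L (ap a + sp s)) ^ n) (sm t)
      = sm t + am (-(t * a))
        + ι0 ((LinearMap.mulLeft k s) ∘ₗ (LinearMap.mulLeft k t)
            - (2 : k)⁻¹ • Vlin k A (fun x => bar x) a (t * a))
        + ap (-(s * (t * a)) + (6 : k)⁻¹ • Uop k A (fun x => bar x) a (t * a))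
        + sp (-(s * (t * s)) - (2 : k)⁻¹ • psiA A (fun x => bar x) a (s * (t * a))
            + (24 : k)⁻¹ • psiA A (fun x => bar x) a
                (Uop k A (fun x => bar x) a (t * a))) := by
  have hbar1 : bar 1 = (1 : A) := by
    have h := hbar_mul (bar 1) 1
    rw [mul_one, hbar_inv] at h
    rw [mul_one] at h
    exact h.symm
  -- skew-alternativity consequence: s(ts) = (st)s
  have key : s * (t * s) = (s * t) * s := by
    have H1 := DFunLike.congr_fun (hstruct 1 s 1 t) s
    have H2 := DFunLike.congr_fun (hstruct 1 s s t) 1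
    simp only [Vlin, LinearMap.sub_apply, LinearMap.add_apply, LinearMap.coe_comp,
      Function.comp_apply, LinearMap.mulLeft_apply, LinearMap.mulRight_apply,
      map_add, map_sub, map_neg, hbar_mul, hbar_inv, hs, ht, hbar1, one_mul, mul_one,
      neg_neg, mul_neg, neg_mul, add_mul, mul_add, sub_mul, mul_sub] at H1 H2
    have key4 : (4:ℤ) • (s * (t * s)) = (4:ℤ) • ((s * t) * s) := by
      linear_combination (norm := abel1) H2 - H1
    have h4ne : (4:k) ≠ 0 := by
      have h : (4:k) = 2 * 2 := by norm_num
      rw [h]; exact mul_ne_zero h2 h2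
    have h4 : (4:k) • (s * (t * s)) = (4:k) • ((s * t) * s) := by
      rw [show ((4:k)) = ((4:ℤ):k) by norm_num, Int.cast_smul_eq_zsmul,
        Int.cast_smul_eq_zsmul]
      exact key4
    have := congrArg (fun z => (4:k)⁻¹ • z) h4
    simpa [smul_smul, inv_mul_cancel₀ h4ne] using this
  have hY : bar (s * (t * s)) = -(s * (t * s)) := by
    simp [hbar_mul, hs, ht, key]
  have hpsi : ∀ x y : A, ⁅ap x, ap y⁆ = sp (psiA A (⇑bar) x y) := fun x y => h_ap_ap x y
  have hψs : ∀ x y : A, bar (psiA A (⇑bar) x y) = -(psiA A (⇑bar) x y) := by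
    intro x y; simp [psiA, hbar_mul, hbar_inv, neg_sub]
  have hWmem : (LinearMap.mulLeft k s) ∘ₗ (LinearMap.mulLeft k t) ∈ InstSpan k A ⇑bar :=
    hLL s t hs ht
  have hVatmem : Vlin k A (⇑bar) a (t * a) ∈ InstSpan k A ⇑bar :=
    Submodule.subset_span ⟨a, t * a, rfl⟩
  have hWa : ((LinearMap.mulLeft k s) ∘ₗ (LinearMap.mulLeft k t)) a = s * (t * a) := rfl
  have hVd : Vdelta k A (⇑bar) ((LinearMap.mulLeft k s) ∘ₗ (LinearMap.mulLeft k t)) s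
      = s * (t * s) + s * (t * s) := by
    simp [Vdelta, LinearMap.add_apply, LinearMap.mulRight_apply, LinearMap.coe_comp,
      Function.comp_apply, LinearMap.mulLeft_apply, hbar_mul, hs, ht]
  have b_apam : ⁅ap a, am (t * a)⁆ = ι0 (Vlin k A (⇑bar) a (t * a)) := h_ap_am a (t * a)
  have b_spam : ⁅sp s, am (t * a)⁆ = ap (s * (t * a)) := h_sp_am s (t * a) hs
  have b_apW : ⁅ap a, ι0 ((LinearMap.mulLeft k s) ∘ₗ (LinearMap.mulLeft k t))⁆
      = -ap (s * (t * a)) := by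
    rw [← lie_skew, h_i0_ap _ hWmem a, hWa]
  have b_spW : ⁅sp s, ι0 ((LinearMap.mulLeft k s) ∘ₗ (LinearMap.mulLeft k t))⁆
      = -(sp (s * (t * s)) + sp (s * (t * s))) := by
    rw [← lie_skew, h_i0_sp _ hWmem s hs, hVd, map_add]
  have b_apVat : ⁅ap a, ι0 (Vlin k A (⇑bar) a (t * a))⁆
      = -ap ((Vlin k A (⇑bar) a (t * a)) a) := by
    rw [← lie_skew, h_i0_ap _ hVatmem a]
  have b_spVat : ⁅sp s, ι0 (Vlin k A (⇑bar) a (t * a))⁆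
      = sp (psiA A (⇑bar) a (s * (t * a))) := by
    rw [← b_apam, leibniz_lie, h_sp_ap s a hs, zero_lie, b_spam, hpsi, zero_add]
  have b_apspY : ⁅ap a, sp (s * (t * s))⁆ = 0 := by
    rw [← lie_skew, h_sp_ap _ a hY, neg_zero]
  have b_spspY : ⁅sp s, sp (s * (t * s))⁆ = 0 := h_sp_sp s _ hs hY
  have b_apspψ : ∀ x y : A, ⁅ap a, sp (psiA A (⇑bar) x y)⁆ = 0 := fun x y => by
    rw [← lie_skew, h_sp_ap _ a (hψs x y), neg_zero]
  have b_spspψ : ∀ x y : A, ⁅sp s, sp (psiA A (⇑bar) x y)⁆ = 0 := fun x y =>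
    h_sp_sp s _ hs (hψs x y)
  have b_spap : ∀ x : A, ⁅sp s, ap x⁆ = 0 := fun x => h_sp_ap s x hs
  have hAd : ∀ x : L, (LieAlgebra.ad k L (ap a + sp s)) x = ⁅ap a, x⁆ + ⁅sp s, x⁆ := by
    intro x; rw [LieAlgebra.ad_apply, add_lie]
  -- the iterated brackets
  have k1 : (LieAlgebra.ad k L (ap a + sp s)) (sm t)
      = -am (t * a) + ι0 ((LinearMap.mulLeft k s) ∘ₗ (LinearMap.mulLeft k t)) := by
    rw [hAd, h_ap_sm a t ht, h_sp_sm s t hs ht]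
  have k2 : (LieAlgebra.ad k L (ap a + sp s))
        (-am (t * a) + ι0 ((LinearMap.mulLeft k s) ∘ₗ (LinearMap.mulLeft k t)))
      = -ι0 (Vlin k A (⇑bar) a (t * a))
        + -(ap (s * (t * a)) + ap (s * (t * a)))
        + -(sp (s * (t * s)) + sp (s * (t * s))) := by
    rw [hAd]
    simp only [lie_add, lie_neg, b_apam, b_spam, b_apW, b_spW]
    abel
  have k3 : (LieAlgebra.ad k L (ap a + sp s))
        (-ι0 (Vlin k A (⇑bar) a (t * a))
          + -(ap (s * (t * a)) + ap (s * (t * a)))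
          + -(sp (s * (t * s)) + sp (s * (t * s))))
      = ap ((Vlin k A (⇑bar) a (t * a)) a)
        + -(sp (psiA A (⇑bar) a (s * (t * a))) + sp (psiA A (⇑bar) a (s * (t * a)))
            + sp (psiA A (⇑bar) a (s * (t * a)))) := by
    rw [hAd]
    simp only [lie_add, lie_neg, b_apVat, b_spVat, hpsi, b_apspY, b_spspY, b_spap,
      neg_neg, neg_zero, add_zero, zero_add]
    abel
  have k4 : (LieAlgebra.ad k L (ap a + sp s))
        (ap ((Vlin k A (⇑bar) a (t * a)) a)
          + -(sp (psiA A (⇑bar) a (s * (t * a))) + sp (psiA A (⇑bar) a (s * (t * a)))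
              + sp (psiA A (⇑bar) a (s * (t * a)))))
      = sp (psiA A (⇑bar) a ((Vlin k A (⇑bar) a (t * a)) a)) := by
    rw [hAd]
    simp only [lie_add, lie_neg, hpsi, b_spap, b_apspψ, b_spspψ,
      neg_zero, add_zero, zero_add]
  have k5 : (LieAlgebra.ad k L (ap a + sp s))
        (sp (psiA A (⇑bar) a ((Vlin k A (⇑bar) a (t * a)) a))) = 0 := by
    rw [hAd, b_apspψ, b_spspψ, add_zero]
  have p4 : ((LieAlgebra.ad k L (ap a + sp s)) ^ 4) (sm t)
      = sp (psiA A (⇑bar) a ((Vlin k A (⇑bar) a (t * a)) a)) := by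
    rw [pow_succ, Module.End.mul_apply, k1, pow_succ, Module.End.mul_apply, k2,
      pow_succ, Module.End.mul_apply, k3, pow_one, k4]
  have p5 : ((LieAlgebra.ad k L (ap a + sp s)) ^ 5) (sm t) = 0 := by
    rw [pow_succ, Module.End.mul_apply, k1, pow_succ, Module.End.mul_apply, k2,
      pow_succ, Module.End.mul_apply, k3, pow_succ, Module.End.mul_apply, k4, pow_one, k5]
  refine ⟨p4, p5, ?_⟩
  have p0 : ((LieAlgebra.ad k L (ap a + sp s)) ^ 0) (sm t) = sm t := by
    rw [pow_zero, Module.End.one_apply]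
  have p1 : ((LieAlgebra.ad k L (ap a + sp s)) ^ 1) (sm t)
      = -am (t * a) + ι0 ((LinearMap.mulLeft k s) ∘ₗ (LinearMap.mulLeft k t)) := by
    rw [pow_one, k1]
  have p2 : ((LieAlgebra.ad k L (ap a + sp s)) ^ 2) (sm t)
      = -ι0 (Vlin k A (⇑bar) a (t * a))
        + -(ap (s * (t * a)) + ap (s * (t * a)))
        + -(sp (s * (t * s)) + sp (s * (t * s))) := by
    rw [pow_succ, Module.End.mul_apply, k1, pow_one, k2]
  have p3 : ((LieAlgebra.ad k L (ap a + sp s)) ^ 3) (sm t)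
      = ap ((Vlin k A (⇑bar) a (t * a)) a)
        + -(sp (psiA A (⇑bar) a (s * (t * a))) + sp (psiA A (⇑bar) a (s * (t * a)))
            + sp (psiA A (⇑bar) a (s * (t * a)))) := by
    rw [pow_succ, Module.End.mul_apply, k1, pow_succ, Module.End.mul_apply, k2, pow_one, k3]
  have main3 : (∑ n ∈ Finset.range 5,
          (n.factorial : k)⁻¹ • (LieAlgebra.ad k L (ap a + sp s)) ^ n) (sm t)
      = sm t + am (-(t * a))
        + ι0 ((LinearMap.mulLeft k s) ∘ₗ (LinearMap.mulLeft k t)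
            - (2 : k)⁻¹ • Vlin k A (⇑bar) a (t * a))
        + ap (-(s * (t * a)) + (6 : k)⁻¹ • ((Vlin k A (⇑bar) a (t * a)) a))
        + sp (-(s * (t * s)) - (2 : k)⁻¹ • psiA A (⇑bar) a (s * (t * a))
            + (24 : k)⁻¹ • psiA A (⇑bar) a ((Vlin k A (⇑bar) a (t * a)) a)) := by
    have hc63 : (6:k)⁻¹ * 3 = (2:k)⁻¹ := by
      rw [show (6:k) = 2*3 from by norm_num, mul_inv, mul_assoc, inv_mul_cancel₀ h3,
        mul_one]
    have hh2 : (2:k)⁻¹ • (-ι0 (Vlin k A (⇑bar) a (t * a))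
          + -(ap (s * (t * a)) + ap (s * (t * a)))
          + -(sp (s * (t * s)) + sp (s * (t * s))))
        = -((2:k)⁻¹ • ι0 (Vlin k A (⇑bar) a (t * a))) + -ap (s * (t * a))
          + -sp (s * (t * s)) := by
      have e1 : (2:k)⁻¹ • (ap (s * (t * a)) + ap (s * (t * a))) = ap (s * (t * a)) := by
        rw [← two_smul k, smul_smul, inv_mul_cancel₀ h2, one_smul]
      have e2 : (2:k)⁻¹ • (sp (s * (t * s)) + sp (s * (t * s))) = sp (s * (t * s)) := by
        rw [← two_smul k, smul_smul, inv_mul_cancel₀ h2, one_smul]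
      rw [smul_add, smul_add, smul_neg, smul_neg, smul_neg, e1, e2]
    have hh3 : (6:k)⁻¹ • (ap ((Vlin k A (⇑bar) a (t * a)) a)
          + -(sp (psiA A (⇑bar) a (s * (t * a))) + sp (psiA A (⇑bar) a (s * (t * a)))
              + sp (psiA A (⇑bar) a (s * (t * a)))))
        = (6:k)⁻¹ • ap ((Vlin k A (⇑bar) a (t * a)) a)
          + -((2:k)⁻¹ • sp (psiA A (⇑bar) a (s * (t * a)))) := by
      have e3 : (6:k)⁻¹ • (sp (psiA A (⇑bar) a (s * (t * a)))
            + sp (psiA A (⇑bar) a (s * (t * a)))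
            + sp (psiA A (⇑bar) a (s * (t * a))))
          = (2:k)⁻¹ • sp (psiA A (⇑bar) a (s * (t * a))) := by
        rw [show (sp (psiA A (⇑bar) a (s * (t * a)))
              + sp (psiA A (⇑bar) a (s * (t * a)))
              + sp (psiA A (⇑bar) a (s * (t * a))) : L)
            = (3:k) • sp (psiA A (⇑bar) a (s * (t * a))) from by
          rw [show (3:k) = 1+1+1 from by norm_num, add_smul, add_smul, one_smul]]
        rw [smul_smul, hc63]
      rw [smul_add, smul_neg, e3]
    rw [LinearMap.sum_apply]
    simp only [LinearMap.smul_apply]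
    rw [Finset.sum_range_succ, Finset.sum_range_succ, Finset.sum_range_succ,
      Finset.sum_range_succ, Finset.sum_range_succ, Finset.sum_range_zero]
    rw [p0, p1, p2, p3, p4]
    simp only [show Nat.factorial 0 = 1 from rfl, show Nat.factorial 1 = 1 from rfl,
      show Nat.factorial 2 = 2 from rfl, show Nat.factorial 3 = 6 from rfl,
      show Nat.factorial 4 = 24 from rfl, Nat.cast_one, Nat.cast_ofNat, inv_one,
      one_smul]
    rw [hh2, hh3]
    simp only [map_add, map_neg, map_sub, map_smul]
    abel
  exact main3
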